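/- arXiv:2207.05852 — 5 statements merged into one kernel-verified Lean document; each statement's English description precedes it below -/
import Mathlib

section
/- Proposition 1(i): For every stage h ∈ {1,...,H}, state s ∈ S and action a ∈ A such that there exists at least one policy π ∈ Π with p^π_h(s,a) > 0, the conditional return gap dominates the value gap: Δtilde_h(s,a) ≥ Δ_h(s,a). -/
/-- A finite episodic MDP with horizon `H`, initial state `s1`,
transition kernel `p h s a s'` and mean rewards `r h s a` (for stages `h ∈ {1,…,H}`). -/
structure MDP (S A : Type) [Fintype S] [Fintype A] where
  H : ℕ
  H_pos : 1 ≤ H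
  s1 : S
  p : ℕ → S → A → S → ℝ
  r : ℕ → S → A → ℝ
  p_nonneg : ∀ h s a s', 1 ≤ h → h ≤ H → 0 ≤ p h s a s'
  p_sum_one : ∀ h s a, 1 ≤ h → h ≤ H → ∑ s' : S, p h s a s' = 1
  r_nonneg : ∀ h s a, 1 ≤ h → h ≤ H → 0 ≤ r h s a
  r_le_one : ∀ h s a, 1 ≤ h → h ≤ H → r h s a ≤ 1

namespace MDP

variable {S A : Type} [Fintype S] [Fintype A] [DecidableEq S] [DecidableEq A]
variable (M : MDP S A)

/-- Fuel-indexed value of policy `π`: `polValAux M π k s = V^π_{H+1-k}(s)`. -/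
noncomputable def polValAux (π : ℕ → S → A) : ℕ → S → ℝ
  | 0, _ => 0
  | k + 1, s =>
      M.r (M.H - k) s (π (M.H - k) s) +
        ∑ s' : S, M.p (M.H - k) s (π (M.H - k) s) s' * polValAux π k s'

/-- `V^π_h(s)`, for `1 ≤ h ≤ H + 1`. -/
noncomputable def polVal (π : ℕ → S → A) (h : ℕ) (s : S) : ℝ :=
  M.polValAux π (M.H + 1 - h) s

/-- `Q^π_h(s,a)`. -/
noncomputable def polQ (π : ℕ → S → A) (h : ℕ) (s : S) (a : A) : ℝ :=
  M.r h s a + ∑ s' : S, M.p h s a s' * M.polVal π (h + 1) s'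

/-- Fuel-indexed optimal value: `optValAux M k s = V*_{H+1-k}(s)`. -/
noncomputable def optValAux : ℕ → S → ℝ
  | 0, _ => 0
  | k + 1, s =>
      ⨆ a : A, (M.r (M.H - k) s a + ∑ s' : S, M.p (M.H - k) s a s' * optValAux k s')

/-- `V*_h(s)`, for `1 ≤ h ≤ H + 1`. -/
noncomputable def optVal (h : ℕ) (s : S) : ℝ := M.optValAux (M.H + 1 - h) s

/-- `Q*_h(s,a)`. -/
noncomputable def optQ (h : ℕ) (s : S) (a : A) : ℝ :=
  M.r h s a + ∑ s' : S, M.p h s a s' * M.optVal (h + 1) s'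

/-- Visitation probability `p^π_h(s)`, for `1 ≤ h ≤ H`. -/
noncomputable def visit (π : ℕ → S → A) : ℕ → S → ℝ
  | 0, _ => 0
  | 1, s => if s = M.s1 then 1 else 0
  | h + 2, s' => ∑ s : S, visit π (h + 1) s * M.p (h + 1) s (π (h + 1) s) s'

/-- State-action visitation probability `p^π_h(s,a)`. -/
noncomputable def visitSA (π : ℕ → S → A) (h : ℕ) (s : S) (a : A) : ℝ :=
  if π h s = a then M.visit π h s else 0

/-- Fuel-indexed conditional visitation: `cvisitAux M π s h k s' = p^π_{h+k}(s' | s, h)`. -/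
noncomputable def cvisitAux (π : ℕ → S → A) (s : S) (h : ℕ) : ℕ → S → ℝ
  | 0, s' => if s' = s then 1 else 0
  | k + 1, s' =>
      ∑ s'' : S, cvisitAux π s h k s'' * M.p (h + k) s'' (π (h + k) s'') s'

/-- Conditional visitation probability `p^π_ℓ(s' | s, h)`, for `h ≤ ℓ`. -/
noncomputable def cvisit (π : ℕ → S → A) (s : S) (h ℓ : ℕ) (s' : S) : ℝ :=
  M.cvisitAux π s h (ℓ - h) s'

/-- Value gap `Δ_h(s,a) = V*_h(s) - Q*_h(s,a)`. -/
noncomputable def valGap (h : ℕ) (s : S) (a : A) : ℝ := M.optVal h s - M.optQ h s a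

/-- The worst conditional value loss of policy `π`:
`max_{ℓ ∈ [H]} max_{s' : p^π_ℓ(s') > 0} (V*_ℓ(s') - V^π_ℓ(s'))`. -/
noncomputable def condRetGap (π : ℕ → S → A) : ℝ :=
  sSup {x : ℝ | ∃ ℓ, 1 ≤ ℓ ∧ ℓ ≤ M.H ∧ ∃ s' : S,
    M.visit π ℓ s' > 0 ∧ x = M.optVal ℓ s' - M.polVal π ℓ s'}

/-- Conditional return gap `Δtilde_h(s,a)`. -/
noncomputable def tildeGap (h : ℕ) (s : S) (a : A) : ℝ :=
  sInf {x : ℝ | ∃ π : ℕ → S → A, M.visitSA π h s a > 0 ∧ x = M.condRetGap π}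

/-- Return gap `Δbar_h(s,a) = V*_1(s1) - max_{π : p^π_h(s,a) > 0} V^π_1(s1)`. -/
noncomputable def barGap (h : ℕ) (s : S) (a : A) : ℝ :=
  M.optVal 1 M.s1 -
    sSup {x : ℝ | ∃ π : ℕ → S → A, M.visitSA π h s a > 0 ∧ x = M.polVal π 1 M.s1}

end MDP

/-! A policy `π` with `p^π_h(s,a) > 0` reaches `s` at stage `h` and plays `a` there, so
`V^π_h(s) = Q^π_h(s,a) ≤ Q*_h(s,a)`. Hence `Δ_h(s,a) ≤ V*_h(s) - V^π_h(s)`, which is one of the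
losses maximised in the conditional return gap of `π`. -/

namespace MDP

variable {S A : Type} [Fintype S] [Fintype A] (M : MDP S A)

theorem polValAux_le_optValAux (π : ℕ → S → A) {k : ℕ} (hk : k ≤ M.H) (s : S) :
    M.polValAux π k s ≤ M.optValAux k s := by
  induction k generalizing s with
  | zero => simp [polValAux, optValAux]
  | succ k ih =>
    have hstage : 1 ≤ M.H - k ∧ M.H - k ≤ M.H := by omega
    let q : A → ℝ := fun b ↦ M.r (M.H - k) s b + ∑ s', M.p (M.H - k) s b s' * M.optValAux k s'
    calc M.polValAux π (k + 1) s
        ≤ q (π (M.H - k) s) := by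
          refine add_le_add_right (Finset.sum_le_sum fun s' _ ↦ ?_) _
          exact mul_le_mul_of_nonneg_left (ih (by omega) s')
            (M.p_nonneg _ _ _ _ hstage.1 hstage.2)
      _ ≤ ⨆ b, q b := le_ciSup (Set.finite_range q).bddAbove _

theorem polVal_le_optVal (π : ℕ → S → A) {h : ℕ} (hh : 1 ≤ h) (s : S) :
    M.polVal π h s ≤ M.optVal h s :=
  M.polValAux_le_optValAux π (by omega) s

theorem polVal_eq_polQ (π : ℕ → S → A) {h : ℕ} (hh1 : 1 ≤ h) (hhH : h ≤ M.H) (s : S) :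
    M.polVal π h s = M.polQ π h s (π h s) := by
  obtain ⟨k, rfl⟩ : ∃ k, h = M.H - k := ⟨M.H - h, by omega⟩
  have hfuel : M.H + 1 - (M.H - k) = (M.H + 1 - (M.H - k + 1)) + 1 := by omega
  have hk : M.H - (M.H + 1 - (M.H - k + 1)) = M.H - k := by omega
  rw [polVal, hfuel, polValAux, hk]
  rfl

theorem polQ_le_optQ (π : ℕ → S → A) {h : ℕ} (hh1 : 1 ≤ h) (hhH : h ≤ M.H) (s : S) (a : A) :
    M.polQ π h s a ≤ M.optQ h s a :=
  add_le_add_right (Finset.sum_le_sum fun s' _ ↦ mul_le_mul_of_nonneg_left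
    (M.polVal_le_optVal π (by omega) s') (M.p_nonneg _ _ _ _ hh1 hhH)) _

variable [DecidableEq S]

theorem sub_polVal_le_condRetGap (π : ℕ → S → A) {ℓ : ℕ} (hℓ1 : 1 ≤ ℓ) (hℓH : ℓ ≤ M.H)
    {s : S} (hs : M.visit π ℓ s > 0) :
    M.optVal ℓ s - M.polVal π ℓ s ≤ M.condRetGap π := by
  refine le_csSup ?_ ⟨ℓ, hℓ1, hℓH, s, hs, rfl⟩
  refine ((Set.finite_Icc 1 M.H).prod Set.finite_univ |>.image
    fun q : ℕ × S ↦ M.optVal q.1 q.2 - M.polVal π q.1 q.2).bddAbove.mono ?_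
  rintro x ⟨ℓ, hℓ1, hℓH, s', -, rfl⟩
  exact ⟨(ℓ, s'), ⟨⟨hℓ1, hℓH⟩, trivial⟩, rfl⟩

variable [DecidableEq A]

theorem visitSA_pos_iff (π : ℕ → S → A) (h : ℕ) (s : S) (a : A) :
    M.visitSA π h s a > 0 ↔ π h s = a ∧ M.visit π h s > 0 := by
  unfold visitSA
  split_ifs with hπ <;> simp [hπ]

theorem valGap_le_condRetGap (π : ℕ → S → A) {h : ℕ} (hh1 : 1 ≤ h) (hhH : h ≤ M.H) {s : S}
    {a : A} (hπ : M.visitSA π h s a > 0) : M.valGap h s a ≤ M.condRetGap π := by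
  obtain ⟨hπa, hvisit⟩ := (M.visitSA_pos_iff π h s a).1 hπ
  calc M.valGap h s a = M.optVal h s - M.optQ h s a := rfl
    _ ≤ M.optVal h s - M.polVal π h s := by
      rw [M.polVal_eq_polQ π hh1 hhH, hπa]
      exact sub_le_sub_left (M.polQ_le_optQ π hh1 hhH s a) _
    _ ≤ M.condRetGap π := M.sub_polVal_le_condRetGap π hh1 hhH hvisit

end MDP

theorem tildeGap_ge_valGap_general {S A : Type} [Fintype S] [Fintype A]
    [DecidableEq S] [DecidableEq A] (M : MDP S A)
    (h : ℕ) (hh1 : 1 ≤ h) (hhH : h ≤ M.H) (s : S) (a : A)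
    (hex : ∃ π : ℕ → S → A, M.visitSA π h s a > 0) :
    M.tildeGap h s a ≥ M.valGap h s a := by
  obtain ⟨π₀, hπ₀⟩ := hex
  refine le_csInf ⟨_, π₀, hπ₀, rfl⟩ ?_
  rintro x ⟨π, hπ, rfl⟩
  exact M.valGap_le_condRetGap π hh1 hhH hπ

/-- Proposition 1(i): the conditional return gap dominates the value gap. -/
theorem tildeGap_ge_valGap {S A : Type} [Fintype S] [Nonempty S] [Fintype A] [Nonempty A]
    [DecidableEq S] [DecidableEq A] (M : MDP S A)
    (h : ℕ) (hh1 : 1 ≤ h) (hhH : h ≤ M.H) (s : S) (a : A)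
    (hex : ∃ π : ℕ → S → A, M.visitSA π h s a > 0) :
    M.tildeGap h s a ≥ M.valGap h s a :=
  tildeGap_ge_valGap_general M h hh1 hhH s a hex
end

section
/- Proposition 1(ii): For every stage h ∈ {1,...,H}, state s ∈ S and action a ∈ A such that there exists at least one policy π ∈ Π with p^π_h(s,a) > 0, the conditional return gap dominates the return gap: Δtilde_h(s,a) ≥ Δbar_h(s,a). -/
namespace MDP

variable {S A : Type} [Fintype S] [Fintype A] (M : MDP S A) (π : ℕ → S → A)

-- Bounded values keep the `sSup` in `barGap` away from its junk value.
theorem polValAux_le {k : ℕ} (hk : k ≤ M.H) (s : S) : M.polValAux π k s ≤ k := by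
  induction k generalizing s with
  | zero => simp [polValAux]
  | succ k ih =>
    have h1 : 1 ≤ M.H - k := by omega
    have h2 : M.H - k ≤ M.H := Nat.sub_le _ _
    have hr := M.r_le_one (M.H - k) s (π (M.H - k) s) h1 h2
    have hnext : ∑ s', M.p (M.H - k) s (π (M.H - k) s) s' * M.polValAux π k s' ≤ k :=
      calc ∑ s', M.p (M.H - k) s (π (M.H - k) s) s' * M.polValAux π k s'
          ≤ ∑ s', M.p (M.H - k) s (π (M.H - k) s) s' * k :=
            Finset.sum_le_sum fun s' _ =>
              mul_le_mul_of_nonneg_left (ih (by omega) s') (M.p_nonneg _ _ _ _ h1 h2)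
        _ = k := by rw [← Finset.sum_mul, M.p_sum_one _ _ _ h1 h2, one_mul]
    rw [polValAux]
    push_cast
    linarith

theorem polVal_one_le (s : S) : M.polVal π 1 s ≤ M.H := by
  simpa [polVal] using M.polValAux_le π le_rfl s

theorem optVal_sub_polVal_le_condRetGap [DecidableEq S] {ℓ : ℕ} (hℓ1 : 1 ≤ ℓ) (hℓH : ℓ ≤ M.H)
    {s : S} (hs : M.visit π ℓ s > 0) :
    M.optVal ℓ s - M.polVal π ℓ s ≤ M.condRetGap π := by
  refine le_csSup ?_ ⟨ℓ, hℓ1, hℓH, s, hs, rfl⟩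
  refine ((Set.finite_Icc 1 M.H).prod (Set.finite_univ (α := S))).image
    (fun q => M.optVal q.1 q.2 - M.polVal π q.1 q.2) |>.subset ?_ |>.bddAbove
  rintro x ⟨ℓ, h1, h2, s', _, rfl⟩
  exact ⟨(ℓ, s'), ⟨⟨h1, h2⟩, Set.mem_univ _⟩, rfl⟩

theorem visit_one_initial [DecidableEq S] : M.visit π 1 M.s1 = 1 := by
  simp [visit]

theorem optVal_one_sub_polVal_le_condRetGap [DecidableEq S] :
    M.optVal 1 M.s1 - M.polVal π 1 M.s1 ≤ M.condRetGap π :=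
  M.optVal_sub_polVal_le_condRetGap π le_rfl M.H_pos (by rw [visit_one_initial]; exact one_pos)

theorem barGap_le_optVal_sub_polVal [DecidableEq S] [DecidableEq A] {h : ℕ} {s : S} {a : A}
    (hπ : M.visitSA π h s a > 0) :
    M.barGap h s a ≤ M.optVal 1 M.s1 - M.polVal π 1 M.s1 := by
  have hbdd : BddAbove {x | ∃ π' : ℕ → S → A, M.visitSA π' h s a > 0 ∧
      x = M.polVal π' 1 M.s1} := by
    refine ⟨M.H, ?_⟩
    rintro x ⟨π', _, rfl⟩
    exact M.polVal_one_le π' M.s1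
  exact sub_le_sub_left (le_csSup hbdd ⟨π, hπ, rfl⟩) _

end MDP

theorem tildeGap_ge_barGap_general {S A : Type} [Fintype S] [Fintype A]
    [DecidableEq S] [DecidableEq A] (M : MDP S A)
    (h : ℕ) (s : S) (a : A)
    (hex : ∃ π : ℕ → S → A, M.visitSA π h s a > 0) :
    M.tildeGap h s a ≥ M.barGap h s a := by
  obtain ⟨π₀, hπ₀⟩ := hex
  refine le_csInf ⟨M.condRetGap π₀, π₀, hπ₀, rfl⟩ ?_
  rintro x ⟨π, hπ, rfl⟩
  exact (M.barGap_le_optVal_sub_polVal π hπ).trans (M.optVal_one_sub_polVal_le_condRetGap π)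

/-- Proposition 1(ii): the conditional return gap dominates the return gap. -/
theorem tildeGap_ge_barGap {S A : Type} [Fintype S] [Nonempty S] [Fintype A] [Nonempty A]
    [DecidableEq S] [DecidableEq A] (M : MDP S A)
    (h : ℕ) (hh1 : 1 ≤ h) (hhH : h ≤ M.H) (s : S) (a : A)
    (hex : ∃ π : ℕ → S → A, M.visitSA π h s a > 0) :
    M.tildeGap h s a ≥ M.barGap h s a :=
  tildeGap_ge_barGap_general M h s a hex
end

section
/- Lemma (deterministic form of Lemma conf-Q, optimal values): For all h ∈ {1,...,H}, s ∈ S and a ∈ A, the pessimistic and optimistic Q-values bracket the optimal action-values: Qlow_h(s,a) ≤ Q*_h(s,a) ≤ Q̄_h(s,a). -/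
namespace MDP

section Estimates

variable {S A : Type} [Fintype S] [Fintype A] [DecidableEq S] [DecidableEq A] [Nonempty A]
variable (M : MDP S A)
variable (rhat : ℕ → S → A → ℝ) (phat : ℕ → S → A → S → ℝ) (b : ℕ → S → A → ℝ)

/-- Fuel-indexed optimistic value: `VbarAux M rhat phat b k s = V̄_{H+1-k}(s)`. -/
noncomputable def VbarAux : ℕ → S → ℝ
  | 0, _ => 0
  | k + 1, s => ⨆ a : A, min ((k : ℝ) + 1)
      (rhat (M.H - k) s a + b (M.H - k) s a +
        ∑ s' : S, phat (M.H - k) s a s' * VbarAux k s')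

/-- Optimistic value `V̄_h(s)`, for `1 ≤ h ≤ H + 1`. -/
noncomputable def Vbar (h : ℕ) (s : S) : ℝ := VbarAux M rhat phat b (M.H + 1 - h) s

/-- Optimistic Q-value `Q̄_h(s,a)`. -/
noncomputable def Qbar (h : ℕ) (s : S) (a : A) : ℝ :=
  min ((M.H : ℝ) - h + 1)
    (rhat h s a + b h s a + ∑ s' : S, phat h s a s' * Vbar M rhat phat b (h + 1) s')

/-- Fuel-indexed pessimistic value: `VlowAux M rhat phat b k s = Vlow_{H+1-k}(s)`. -/
noncomputable def VlowAux : ℕ → S → ℝ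
  | 0, _ => 0
  | k + 1, s => ⨆ a : A, max 0
      (rhat (M.H - k) s a - b (M.H - k) s a +
        ∑ s' : S, phat (M.H - k) s a s' * VlowAux k s')

/-- Pessimistic value `Vlow_h(s)`, for `1 ≤ h ≤ H + 1`. -/
noncomputable def Vlow (h : ℕ) (s : S) : ℝ := VlowAux M rhat phat b (M.H + 1 - h) s

/-- Pessimistic Q-value `Qlow_h(s,a)`. -/
noncomputable def Qlow (h : ℕ) (s : S) (a : A) : ℝ :=
  max 0 (rhat h s a - b h s a + ∑ s' : S, phat h s a s' * Vlow M rhat phat b (h + 1) s')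

variable (π : ℕ → S → A)

/-- Fuel-indexed policy-specific optimistic value `V̄^π`. -/
noncomputable def VbarPolAux : ℕ → S → ℝ
  | 0, _ => 0
  | k + 1, s => min ((k : ℝ) + 1)
      (rhat (M.H - k) s (π (M.H - k) s) + b (M.H - k) s (π (M.H - k) s) +
        ∑ s' : S, phat (M.H - k) s (π (M.H - k) s) s' * VbarPolAux k s')

/-- Policy-specific optimistic value `V̄^π_h(s)`. -/
noncomputable def VbarPol (h : ℕ) (s : S) : ℝ := VbarPolAux M rhat phat b π (M.H + 1 - h) s

/-- Policy-specific optimistic Q-value `Q̄^π_h(s,a)`. -/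
noncomputable def QbarPol (h : ℕ) (s : S) (a : A) : ℝ :=
  min ((M.H : ℝ) - h + 1)
    (rhat h s a + b h s a + ∑ s' : S, phat h s a s' * VbarPol M rhat phat b π (h + 1) s')

/-- Fuel-indexed policy-specific pessimistic value `Vlow^π`. -/
noncomputable def VlowPolAux : ℕ → S → ℝ
  | 0, _ => 0
  | k + 1, s => max 0
      (rhat (M.H - k) s (π (M.H - k) s) - b (M.H - k) s (π (M.H - k) s) +
        ∑ s' : S, phat (M.H - k) s (π (M.H - k) s) s' * VlowPolAux k s')

/-- Policy-specific pessimistic value `Vlow^π_h(s)`. -/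
noncomputable def VlowPol (h : ℕ) (s : S) : ℝ := VlowPolAux M rhat phat b π (M.H + 1 - h) s

/-- Policy-specific pessimistic Q-value `Qlow^π_h(s,a)`. -/
noncomputable def QlowPol (h : ℕ) (s : S) (a : A) : ℝ :=
  max 0 (rhat h s a - b h s a + ∑ s' : S, phat h s a s' * VlowPol M rhat phat b π (h + 1) s')

end Estimates

end MDP

/-! Under the concentration condition the bonus dominates the error of the estimated Bellman
backup at any value function bounded by `H - h`. Backward induction over the stages then shows
that `Vlow ≤ V* ≤ V̄` at every stage, using that `V*_h` takes values in `[0, H + 1 - h]`, and one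
more backup step gives the bracket for the Q-values. -/

section Backup

variable {ι : Type*} [Fintype ι]

theorem sum_mul_le_of_sum_eq_one {p V : ι → ℝ} {c : ℝ} (hp : ∀ i, 0 ≤ p i)
    (hp1 : ∑ i, p i = 1) (hV : ∀ i, V i ≤ c) : ∑ i, p i * V i ≤ c :=
  calc ∑ i, p i * V i ≤ ∑ i, p i * c :=
        Finset.sum_le_sum fun i _ => mul_le_mul_of_nonneg_left (hV i) (hp i)
    _ = c := by rw [← Finset.sum_mul, hp1, one_mul]

theorem abs_sum_mul_sub_sum_mul_le (p q V : ι → ℝ) {c : ℝ} (hV : ∀ i, |V i| ≤ c) :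
    |∑ i, q i * V i - ∑ i, p i * V i| ≤ c * ∑ i, |q i - p i| := by
  rw [← Finset.sum_sub_distrib, Finset.mul_sum]
  refine (Finset.abs_sum_le_sum_abs _ _).trans (Finset.sum_le_sum fun i _ => ?_)
  rw [← sub_mul, abs_mul, mul_comm]
  exact mul_le_mul_of_nonneg_right (hV i) (abs_nonneg _)

theorem abs_backup_sub_backup_le {r r' c bonus : ℝ} (p p' V : ι → ℝ) (hV : ∀ i, |V i| ≤ c)
    (hconc : |r' - r| + c * ∑ i, |p' i - p i| ≤ bonus) :
    |(r' + ∑ i, p' i * V i) - (r + ∑ i, p i * V i)| ≤ bonus := by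
  have hsum := abs_sum_mul_sub_sum_mul_le p p' V hV
  calc |(r' + ∑ i, p' i * V i) - (r + ∑ i, p i * V i)|
      = |(r' - r) + (∑ i, p' i * V i - ∑ i, p i * V i)| := by ring_nf
    _ ≤ |r' - r| + |∑ i, p' i * V i - ∑ i, p i * V i| := abs_add_le _ _
    _ ≤ bonus := by linarith

theorem pessimistic_backup_le {r r' c bonus : ℝ} {p p' Vlow V : ι → ℝ} (hp' : ∀ i, 0 ≤ p' i)
    (hV : ∀ i, |V i| ≤ c) (hlow : ∀ i, Vlow i ≤ V i)
    (hconc : |r' - r| + c * ∑ i, |p' i - p i| ≤ bonus) :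
    r' - bonus + ∑ i, p' i * Vlow i ≤ r + ∑ i, p i * V i := by
  have hmono : ∑ i, p' i * Vlow i ≤ ∑ i, p' i * V i :=
    Finset.sum_le_sum fun i _ => mul_le_mul_of_nonneg_left (hlow i) (hp' i)
  linarith [(abs_le.mp (abs_backup_sub_backup_le p p' V hV hconc)).2]

theorem le_optimistic_backup {r r' c bonus : ℝ} {p p' V Vbar : ι → ℝ} (hp' : ∀ i, 0 ≤ p' i)
    (hV : ∀ i, |V i| ≤ c) (hbar : ∀ i, V i ≤ Vbar i)
    (hconc : |r' - r| + c * ∑ i, |p' i - p i| ≤ bonus) :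
    r + ∑ i, p i * V i ≤ r' + bonus + ∑ i, p' i * Vbar i := by
  have hmono : ∑ i, p' i * V i ≤ ∑ i, p' i * Vbar i :=
    Finset.sum_le_sum fun i _ => mul_le_mul_of_nonneg_left (hbar i) (hp' i)
  linarith [(abs_le.mp (abs_backup_sub_backup_le p p' V hV hconc)).1]

end Backup

theorem Nat.backward_induction {n : ℕ} {P : ℕ → Prop} (last : P (n + 1))
    (step : ∀ h, 1 ≤ h → h ≤ n → P (h + 1) → P h) {h : ℕ} (hh1 : 1 ≤ h) (hh : h ≤ n + 1) :
    P h := by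
  exact Nat.decreasingInduction (motive := fun h _ => 1 ≤ h → P h)
    (fun k hk ih hk1 => step k hk1 (by omega) (ih (by omega))) (fun _ => last) hh hh1

namespace MDP

variable {S A : Type} [Fintype S] [Fintype A] (M : MDP S A)

section Optimal

theorem optVal_H_add_one (s : S) : M.optVal (M.H + 1) s = 0 := by
  simp [optVal, optValAux]

theorem optVal_eq_iSup_optQ {h : ℕ} (hh1 : 1 ≤ h) (hhH : h ≤ M.H) (s : S) :
    M.optVal h s = ⨆ a, M.optQ h s a := by
  have hfuel : M.H + 1 - h = M.H - h + 1 := by omega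
  have hstage : M.H - (M.H - h) = h := by omega
  have hnext : M.H + 1 - (h + 1) = M.H - h := by omega
  rw [optVal, hfuel, optValAux, hstage]
  simp only [optQ, optVal, hnext]

theorem optQ_nonneg_of_optVal_nonneg {h : ℕ} (hh1 : 1 ≤ h) (hhH : h ≤ M.H)
    (hV : ∀ s', 0 ≤ M.optVal (h + 1) s') (s : S) (a : A) : 0 ≤ M.optQ h s a :=
  add_nonneg (M.r_nonneg h s a hh1 hhH)
    (Finset.sum_nonneg fun s' _ => mul_nonneg (M.p_nonneg h s a s' hh1 hhH) (hV s'))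

theorem optQ_le_of_optVal_le {h : ℕ} (hh1 : 1 ≤ h) (hhH : h ≤ M.H)
    (hV : ∀ s', M.optVal (h + 1) s' ≤ M.H - h) (s : S) (a : A) :
    M.optQ h s a ≤ M.H - h + 1 := by
  have := sum_mul_le_of_sum_eq_one (M.p_nonneg h s a · hh1 hhH) (M.p_sum_one h s a hh1 hhH) hV
  rw [optQ]
  linarith [M.r_le_one h s a hh1 hhH]

theorem optVal_nonneg {h : ℕ} (hh1 : 1 ≤ h) (hh : h ≤ M.H + 1) (s : S) : 0 ≤ M.optVal h s := by
  refine Nat.backward_induction (P := fun h => ∀ s, 0 ≤ M.optVal h s)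
    (fun s => (M.optVal_H_add_one s).ge) (fun h hh1 hhH ih s => ?_) hh1 hh s
  rw [M.optVal_eq_iSup_optQ hh1 hhH]
  exact Real.iSup_nonneg (M.optQ_nonneg_of_optVal_nonneg hh1 hhH ih s)

theorem optVal_le {h : ℕ} (hh1 : 1 ≤ h) (hh : h ≤ M.H + 1) (s : S) :
    M.optVal h s ≤ M.H + 1 - h := by
  refine Nat.backward_induction (P := fun h => ∀ s, M.optVal h s ≤ M.H + 1 - h)
    (fun s => by simp [M.optVal_H_add_one s]) (fun h hh1 hhH ih s => ?_) hh1 hh s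
  have hV : ∀ s', M.optVal (h + 1) s' ≤ M.H - h := fun s' => by
    have := ih s'
    push_cast at this
    linarith
  rw [M.optVal_eq_iSup_optQ hh1 hhH]
  refine Real.iSup_le (fun a => ?_) ?_
  · linarith [M.optQ_le_of_optVal_le hh1 hhH hV s a]
  · have : (h : ℝ) ≤ M.H := by exact_mod_cast hhH
    linarith

theorem abs_optVal_succ_le {h : ℕ} (hhH : h ≤ M.H) (s : S) :
    |M.optVal (h + 1) s| ≤ M.H - h := by
  rw [abs_of_nonneg (M.optVal_nonneg (by omega) (by omega) s)]
  have := M.optVal_le (h := h + 1) (by omega) (by omega) s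
  push_cast at this
  linarith

end Optimal

section Estimates

variable (rhat : ℕ → S → A → ℝ) (phat : ℕ → S → A → S → ℝ) (b : ℕ → S → A → ℝ)

theorem Vlow_H_add_one (s : S) : M.Vlow rhat phat b (M.H + 1) s = 0 := by
  simp [Vlow, VlowAux]

theorem Vbar_H_add_one (s : S) : M.Vbar rhat phat b (M.H + 1) s = 0 := by
  simp [Vbar, VbarAux]

theorem Vlow_eq_iSup_Qlow {h : ℕ} (hh1 : 1 ≤ h) (hhH : h ≤ M.H) (s : S) :
    M.Vlow rhat phat b h s = ⨆ a, M.Qlow rhat phat b h s a := by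
  have hfuel : M.H + 1 - h = M.H - h + 1 := by omega
  have hstage : M.H - (M.H - h) = h := by omega
  have hnext : M.H + 1 - (h + 1) = M.H - h := by omega
  rw [Vlow, hfuel, VlowAux, hstage]
  simp only [Qlow, Vlow, hnext]

theorem Vbar_eq_iSup_Qbar {h : ℕ} (hh1 : 1 ≤ h) (hhH : h ≤ M.H) (s : S) :
    M.Vbar rhat phat b h s = ⨆ a, M.Qbar rhat phat b h s a := by
  have hfuel : M.H + 1 - h = M.H - h + 1 := by omega
  have hstage : M.H - (M.H - h) = h := by omega
  have hnext : M.H + 1 - (h + 1) = M.H - h := by omega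
  have hcap : ((M.H - h : ℕ) : ℝ) + 1 = M.H - h + 1 := by rw [Nat.cast_sub hhH]
  rw [Vbar, hfuel, VbarAux, hstage, hcap]
  simp only [Qbar, Vbar, hnext]

variable {M rhat phat b}

theorem Qlow_le_optQ {h : ℕ} (hh1 : 1 ≤ h) (hhH : h ≤ M.H) {s : S} {a : A}
    (hphat_nonneg : ∀ s', 0 ≤ phat h s a s')
    (hconc : |rhat h s a - M.r h s a| +
        ((M.H : ℝ) - h) * ∑ s' : S, |phat h s a s' - M.p h s a s'| ≤ b h s a)
    (hlow : ∀ s', M.Vlow rhat phat b (h + 1) s' ≤ M.optVal (h + 1) s') :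
    M.Qlow rhat phat b h s a ≤ M.optQ h s a :=
  max_le (M.optQ_nonneg_of_optVal_nonneg hh1 hhH (M.optVal_nonneg (by omega) (by omega)) s a)
    (pessimistic_backup_le hphat_nonneg (M.abs_optVal_succ_le hhH) hlow hconc)

theorem optQ_le_Qbar {h : ℕ} (hh1 : 1 ≤ h) (hhH : h ≤ M.H) {s : S} {a : A}
    (hphat_nonneg : ∀ s', 0 ≤ phat h s a s')
    (hconc : |rhat h s a - M.r h s a| +
        ((M.H : ℝ) - h) * ∑ s' : S, |phat h s a s' - M.p h s a s'| ≤ b h s a)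
    (hbar : ∀ s', M.optVal (h + 1) s' ≤ M.Vbar rhat phat b (h + 1) s') :
    M.optQ h s a ≤ M.Qbar rhat phat b h s a :=
  le_min
    (M.optQ_le_of_optVal_le hh1 hhH
      (fun s' => (le_abs_self _).trans (M.abs_optVal_succ_le hhH s')) s a)
    (le_optimistic_backup hphat_nonneg (M.abs_optVal_succ_le hhH) hbar hconc)

theorem Vlow_le_optVal
    (hphat_nonneg : ∀ h s a s', 1 ≤ h → h ≤ M.H → 0 ≤ phat h s a s')
    (hconc : ∀ h s a, 1 ≤ h → h ≤ M.H →
      |rhat h s a - M.r h s a| +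
        ((M.H : ℝ) - h) * ∑ s' : S, |phat h s a s' - M.p h s a s'| ≤ b h s a)
    {h : ℕ} (hh1 : 1 ≤ h) (hh : h ≤ M.H + 1) (s : S) :
    M.Vlow rhat phat b h s ≤ M.optVal h s := by
  refine Nat.backward_induction (P := fun h => ∀ s, M.Vlow rhat phat b h s ≤ M.optVal h s)
    (fun s => by rw [Vlow_H_add_one, optVal_H_add_one]) (fun h hh1 hhH ih s => ?_) hh1 hh s
  rw [M.Vlow_eq_iSup_Qlow rhat phat b hh1 hhH, M.optVal_eq_iSup_optQ hh1 hhH]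
  exact ciSup_mono (Finite.bddAbove_range _) fun a =>
    Qlow_le_optQ hh1 hhH (hphat_nonneg h s a · hh1 hhH) (hconc h s a hh1 hhH) ih

theorem optVal_le_Vbar
    (hphat_nonneg : ∀ h s a s', 1 ≤ h → h ≤ M.H → 0 ≤ phat h s a s')
    (hconc : ∀ h s a, 1 ≤ h → h ≤ M.H →
      |rhat h s a - M.r h s a| +
        ((M.H : ℝ) - h) * ∑ s' : S, |phat h s a s' - M.p h s a s'| ≤ b h s a)
    {h : ℕ} (hh1 : 1 ≤ h) (hh : h ≤ M.H + 1) (s : S) :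
    M.optVal h s ≤ M.Vbar rhat phat b h s := by
  refine Nat.backward_induction (P := fun h => ∀ s, M.optVal h s ≤ M.Vbar rhat phat b h s)
    (fun s => by rw [Vbar_H_add_one, optVal_H_add_one]) (fun h hh1 hhH ih s => ?_) hh1 hh s
  rw [M.Vbar_eq_iSup_Qbar rhat phat b hh1 hhH, M.optVal_eq_iSup_optQ hh1 hhH]
  exact ciSup_mono (Finite.bddAbove_range _) fun a =>
    optQ_le_Qbar hh1 hhH (hphat_nonneg h s a · hh1 hhH) (hconc h s a hh1 hhH) ih

end Estimates

end MDP

theorem Qlow_le_optQ_le_Qbar_general {S A : Type} [Fintype S] [Fintype A] (M : MDP S A)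
    (rhat : ℕ → S → A → ℝ) (phat : ℕ → S → A → S → ℝ) (b : ℕ → S → A → ℝ)
    (hphat_nonneg : ∀ h s a s', 1 ≤ h → h ≤ M.H → 0 ≤ phat h s a s')
    (hconc : ∀ h s a, 1 ≤ h → h ≤ M.H →
      |rhat h s a - M.r h s a| +
        ((M.H : ℝ) - h) * ∑ s' : S, |phat h s a s' - M.p h s a s'| ≤ b h s a)
    (h : ℕ) (hh1 : 1 ≤ h) (hhH : h ≤ M.H) (s : S) (a : A) :
    MDP.Qlow M rhat phat b h s a ≤ M.optQ h s a ∧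
      M.optQ h s a ≤ MDP.Qbar M rhat phat b h s a :=
  ⟨MDP.Qlow_le_optQ hh1 hhH (hphat_nonneg h s a · hh1 hhH) (hconc h s a hh1 hhH)
      (MDP.Vlow_le_optVal hphat_nonneg hconc (by omega) (by omega)),
    MDP.optQ_le_Qbar hh1 hhH (hphat_nonneg h s a · hh1 hhH) (hconc h s a hh1 hhH)
      (MDP.optVal_le_Vbar hphat_nonneg hconc (by omega) (by omega))⟩

/-- The pessimistic and optimistic Q-values bracket the optimal action-values. -/
theorem Qlow_le_optQ_le_Qbar {S A : Type} [Fintype S] [Nonempty S] [Fintype A] [Nonempty A]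
    [DecidableEq S] [DecidableEq A] (M : MDP S A)
    (rhat : ℕ → S → A → ℝ) (phat : ℕ → S → A → S → ℝ) (b : ℕ → S → A → ℝ)
    (hphat_nonneg : ∀ h s a s', 1 ≤ h → h ≤ M.H → 0 ≤ phat h s a s')
    (hphat_sum : ∀ h s a, 1 ≤ h → h ≤ M.H → ∑ s' : S, phat h s a s' = 1)
    (hb_nonneg : ∀ h s a, 1 ≤ h → h ≤ M.H → 0 ≤ b h s a)
    (hconc : ∀ h s a, 1 ≤ h → h ≤ M.H →
      |rhat h s a - M.r h s a| +
        ((M.H : ℝ) - h) * ∑ s' : S, |phat h s a s' - M.p h s a s'| ≤ b h s a)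
    (h : ℕ) (hh1 : 1 ≤ h) (hhH : h ≤ M.H) (s : S) (a : A) :
    MDP.Qlow M rhat phat b h s a ≤ M.optQ h s a ∧
      M.optQ h s a ≤ MDP.Qbar M rhat phat b h s a :=
  Qlow_le_optQ_le_Qbar_general M rhat phat b hphat_nonneg hconc h hh1 hhH s a
end

section
/- Lemma (solving a logarithmic fixed-point inequality): Let B, C and k be real numbers with B ≥ 1, C ≥ 1 and k ≥ 1. If k ≤ B·log(k) + C, then k ≤ B·log(B^2 + 2C) + C. -/
/-!
Put `t = B² + 2C`. Two tangent-line bounds for the logarithm (at `2B`, then at `4`) give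
`B log t ≤ B² + C`, i.e. `t - B log t ≥ C`. Since `x ↦ x - B log x` is strictly increasing
on `(B, ∞)` and `B < t`, the hypothesis `k - B log k ≤ C` forces `k ≤ t`, whence
`k ≤ B log k + C ≤ B log t + C`.
-/

open Real

namespace Real

theorem log_le_div_add_log_sub_one {x a : ℝ} (hx : 0 < x) (ha : 0 < a) :
    log x ≤ x / a + log a - 1 := by
  have h := log_le_sub_one_of_pos (div_pos hx ha)
  rw [log_div hx.ne' ha.ne'] at h
  linarith

theorem mul_log_sq_add_two_mul_le {B C : ℝ} (hB : 0 < B) (hC : 0 ≤ C) :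
    B * log (B ^ 2 + 2 * C) ≤ B ^ 2 + C := by
  have ht : 0 < B ^ 2 + 2 * C := by positivity
  have h2B : 0 < 2 * B := by positivity
  have log_t := log_le_div_add_log_sub_one ht h2B
  have log_2B := log_le_div_add_log_sub_one h2B four_pos
  have log_four : log 4 < 2 := by
    rw [show (4 : ℝ) = 2 ^ 2 by norm_num, log_pow, Nat.cast_ofNat]
    linarith [log_two_lt_d9]
  calc B * log (B ^ 2 + 2 * C)
      ≤ B * ((B ^ 2 + 2 * C) / (2 * B) + (2 * B / 4 + log 4 - 1) - 1) := by
        gcongr; linarith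
    _ = B ^ 2 + C + B * (log 4 - 2) := by field_simp; ring
    _ ≤ B ^ 2 + C := by linarith [mul_neg_of_pos_of_neg hB (sub_neg.mpr log_four)]

theorem sub_mul_log_lt_sub_mul_log {B t k : ℝ} (hB : 0 ≤ B) (hBt : B < t) (htk : t < k) :
    t - B * log t < k - B * log k := by
  have ht : 0 < t := hB.trans_lt hBt
  have log_k := log_le_div_add_log_sub_one (ht.trans htk) ht
  have : B * (log k - log t) < k - t :=
    calc B * (log k - log t) ≤ B * (k / t - 1) :=
          mul_le_mul_of_nonneg_left (by linarith) hB
      _ < t * (k / t - 1) := by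
        gcongr; rwa [sub_pos, one_lt_div ht]
      _ = k - t := by field_simp
  linarith

end Real

/-- Solving a logarithmic fixed-point inequality. -/
theorem log_fixed_point (B C k : ℝ) (hB : 1 ≤ B) (hC : 1 ≤ C) (hk : 1 ≤ k)
    (h : k ≤ B * Real.log k + C) :
    k ≤ B * Real.log (B ^ 2 + 2 * C) + C := by
  rcases le_or_gt k (B ^ 2 + 2 * C) with hkt | htk
  · calc k ≤ B * log k + C := h
      _ ≤ B * log (B ^ 2 + 2 * C) + C := by gcongr
  · have hBt : B < B ^ 2 + 2 * C := by nlinarith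
    have key := mul_log_sq_add_two_mul_le (by linarith : 0 < B) (by linarith : 0 ≤ C)
    have := sub_mul_log_lt_sub_mul_log (by linarith) hBt htk
    linarith
end

section
/- Lemma (refined bound on the regret-to-PAC conversion time, from the proof of Theorem 2): Let S ≥ 4, A ≥ 2, H ≥ 2 be integers and let ε, δ ∈ (0,1] and T ≥ 1 be real numbers. If T·ε·δ ≤ (8/ε)·log(2SAH·T^2) + 2ε, then T ≤ (2/(ε^2·δ))·(36·log(2SAH) + 16·log(17/(ε^2·δ)) + 9ε^2). -/
/-!
Multiplying the hypothesis by `ε` and writing `c = ε²δ`, `L = log (2SAH)`, it reads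
`c T ≤ B + 16 log T` with `B = 8L + 2ε²`. Since `log T ≤ 2√T`, this forces `c √T ≤ B + 32`,
hence `log T ≤ 2 log ((B + 32) / c)`, and substituting back gives
`c T ≤ B + 32 log ((B + 32) / c)`. Splitting off `log (17 / c)` and bounding the remaining
`log ((B + 32) / 17)` by `(B + 15) / 17` leaves a linear inequality in `L` that holds as soon
as `L ≥ 1`, which is where `2SAH ≥ 32 > e` enters.
-/

open Real

theorem log_le_two_mul_sqrt {x : ℝ} (hx : 0 ≤ x) : log x ≤ 2 * √x := by
  have := log_le_self (sqrt_nonneg x)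
  rw [log_sqrt hx] at this
  linarith

theorem mul_sqrt_le_of_mul_le_add_mul_log {B b c T : ℝ} (hB : 0 ≤ B) (hb : 0 ≤ b)
    (hT : 1 ≤ T) (h : c * T ≤ B + b * log T) : c * √T ≤ B + 2 * b := by
  have hsqrt : 1 ≤ √T := one_le_sqrt.mpr hT
  have hsq : √T * √T = T := mul_self_sqrt (by linarith)
  have hlog := log_le_two_mul_sqrt (x := T) (by linarith)
  have : (c * √T) * √T ≤ (B + 2 * b) * √T := by
    rw [mul_assoc, hsq]
    nlinarith
  exact le_of_mul_le_mul_right this (by linarith)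

theorem mul_le_add_mul_log_div_of_mul_le_add_mul_log {B b c T : ℝ} (hB : 0 ≤ B) (hb : 0 ≤ b)
    (hc : 0 < c) (hT : 1 ≤ T) (h : c * T ≤ B + b * log T) :
    c * T ≤ B + 2 * b * log ((B + 2 * b) / c) := by
  have hsqrt_pos : 0 < √T := sqrt_pos.mpr (by linarith)
  have hsqrt_le : √T ≤ (B + 2 * b) / c := by
    rw [le_div_iff₀ hc, mul_comm]
    exact mul_sqrt_le_of_mul_le_add_mul_log hB hb hT h
  have hlog : log T ≤ 2 * log ((B + 2 * b) / c) := by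
    have := log_le_log hsqrt_pos hsqrt_le
    rw [log_sqrt (by linarith)] at this
    linarith
  linarith [mul_le_mul_of_nonneg_left hlog hb]

theorem refined_conversion_time_bound_general (S A H : ℕ) (hS : 4 ≤ S) (hA : 2 ≤ A) (hH : 2 ≤ H)
    (ε δ T : ℝ) (hε0 : 0 < ε) (hδ0 : 0 < δ) (hT : 1 ≤ T)
    (h : T * ε * δ ≤ (8 / ε) * Real.log (2 * S * A * H * T ^ 2) + 2 * ε) :
    T ≤ (2 / (ε ^ 2 * δ)) *
        (36 * Real.log (2 * S * A * H) + 16 * Real.log (17 / (ε ^ 2 * δ)) + 9 * ε ^ 2) := by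
  set c := ε ^ 2 * δ
  set L := log (2 * S * A * H)
  have hc : 0 < c := by positivity
  have hN : (32 : ℝ) ≤ 2 * S * A * H := by
    have hS' : (4 : ℝ) ≤ S := by exact_mod_cast hS
    have hA' : (2 : ℝ) ≤ A := by exact_mod_cast hA
    have hH' : (2 : ℝ) ≤ H := by exact_mod_cast hH
    calc (32 : ℝ) = 2 * 4 * 2 * 2 := by norm_num
      _ ≤ 2 * S * A * H := by gcongr
  have hL : 1 ≤ L := by
    rw [le_log_iff_exp_le (by linarith)]
    linarith [exp_one_lt_d9]
  have hlin : c * T ≤ (8 * L + 2 * ε ^ 2) + 16 * log T := by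
    rw [log_mul (by positivity) (by positivity), log_pow] at h
    have := mul_le_mul_of_nonneg_right h hε0.le
    field_simp at this
    push_cast at this
    linarith
  have hinv := mul_le_add_mul_log_div_of_mul_le_add_mul_log (by positivity) (by norm_num) hc hT hlin
  set B := 8 * L + 2 * ε ^ 2
  have hsplit : log ((B + 2 * 16) / c) = log ((B + 32) / 17) + log (17 / c) := by
    rw [← log_mul (by positivity) (by positivity)]
    congr 1
    field_simp
    ring
  have hrest : log ((B + 32) / 17) ≤ (B + 32) / 17 - 1 := log_le_sub_one_of_pos (by positivity)
  rw [div_mul_eq_mul_div, le_div_iff₀ hc, mul_comm]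
  linarith [sq_nonneg ε]

/-- Refined bound on the regret-to-PAC conversion time. -/
theorem refined_conversion_time_bound (S A H : ℕ) (hS : 4 ≤ S) (hA : 2 ≤ A) (hH : 2 ≤ H)
    (ε δ T : ℝ) (hε0 : 0 < ε) (hε1 : ε ≤ 1) (hδ0 : 0 < δ) (hδ1 : δ ≤ 1) (hT : 1 ≤ T)
    (h : T * ε * δ ≤ (8 / ε) * Real.log (2 * S * A * H * T ^ 2) + 2 * ε) :
    T ≤ (2 / (ε ^ 2 * δ)) *
        (36 * Real.log (2 * S * A * H) + 16 * Real.log (17 / (ε ^ 2 * δ)) + 9 * ε ^ 2) :=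
  refined_conversion_time_bound_general S A H hS hA hH ε δ T hε0 hδ0 hT h
end
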